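/- arXiv:1910.01971 — 2 statements merged into one kernel-verified Lean document; each statement's English description precedes it below -/
import Mathlib

section
/- Let y_0, y_1, …, y_k ∈ ℝ^m be points in ρ-general position contained in a ball of radius R, and let L = y_0 + span{y_1 - y_0, …, y_k - y_0}. Then there exists a constant c = c(k, R/ρ) such that every unit vector v in the linear span of {y_1 - y_0, …, y_k - y_0} can be written v = Σ_{i=1}^k α_i (y_i - y_0) with |α_i| ≤ c for each i. -/
open Metric Set

/-- If `v = a • e + w` with `w` in a submodule `W` and `e` at distance `≥ ρ` from `W`,
then `|a| * ρ ≤ ‖v‖`. -/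
lemma coeff_abs_le {E : Type*} [NormedAddCommGroup E] [NormedSpace ℝ E]
    {W : Submodule ℝ E} {e v w : E} {a ρ : ℝ} (hρ : 0 ≤ ρ)
    (hd : ρ ≤ Metric.infDist e (W : Set E)) (hw : w ∈ W) (hv : v = a • e + w) :
    |a| * ρ ≤ ‖v‖ := by
  rcases eq_or_ne a 0 with h0 | h0
  · simp [h0, norm_nonneg]
  · have hz : (-(a⁻¹)) • w ∈ W := W.smul_mem _ hw
    have h1 : Metric.infDist e (W : Set E) ≤ dist e ((-(a⁻¹)) • w) :=
      Metric.infDist_le_dist_of_mem hz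
    have h2 : dist e ((-(a⁻¹)) • w) = ‖e + a⁻¹ • w‖ := by
      rw [dist_eq_norm]
      congr 1
      module
    have h3 : v = a • (e + a⁻¹ • w) := by
      rw [hv, smul_add, smul_smul, mul_inv_cancel₀ h0, one_smul]
    calc |a| * ρ ≤ |a| * ‖e + a⁻¹ • w‖ := by
          apply mul_le_mul_of_nonneg_left _ (abs_nonneg a)
          exact hd.trans (h1.trans_eq h2)
      _ = ‖v‖ := by rw [h3, norm_smul, Real.norm_eq_abs]

/-- Main induction: coefficient bounds for vectors in partial spans. -/
lemma main_ind {E : Type*} [NormedAddCommGroup E] [NormedSpace ℝ E]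
    (k : ℕ) (ρ R : ℝ) (hρ : 0 < ρ) (hR : 0 < R) (e : Fin k → E)
    (hnorm : ∀ i, ‖e i‖ ≤ 2 * R)
    (hdist : ∀ i : Fin k,
      ρ ≤ Metric.infDist (e i)
        ((Submodule.span ℝ (e '' {i' : Fin k | (i' : ℕ) < (i : ℕ)}) : Submodule ℝ E) : Set E)) :
    ∀ j : ℕ, j ≤ k → ∀ v ∈ Submodule.span ℝ (e '' {i : Fin k | (i : ℕ) < j}),
      ∃ α : Fin k → ℝ, v = ∑ i, α i • e i ∧
        ∀ i, |α i| ≤ ‖v‖ * (ρ⁻¹ * (2 + 2 * R / ρ) ^ j) := by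
  have hRρ : (0 : ℝ) ≤ 2 * R / ρ := by positivity
  set B : ℝ := 2 + 2 * R / ρ with hBdef
  have hB1' : (1 : ℝ) ≤ B := by rw [hBdef]; linarith
  intro j
  induction j with
  | zero =>
    intro _ v hv
    have : e '' {i : Fin k | (i : ℕ) < 0} = ∅ := by simp
    rw [this, Submodule.span_empty, Submodule.mem_bot] at hv
    exact ⟨0, by simp [hv], fun i => by simp [hv]⟩
  | succ j ih =>
    intro hj1 v hv
    have hjk : j < k := hj1
    set ij : Fin k := ⟨j, hjk⟩ with hij
    have hset : {i : Fin k | (i : ℕ) < j + 1} = insert ij {i : Fin k | (i : ℕ) < j} := by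
      ext i
      simp only [Set.mem_setOf_eq, Set.mem_insert_iff, Nat.lt_succ_iff_lt_or_eq]
      constructor
      · rintro (h | h)
        · exact Or.inr h
        · exact Or.inl (Fin.ext h)
      · rintro (h | h)
        · exact Or.inr (by rw [h])
        · exact Or.inl h
    rw [hset, Set.image_insert_eq] at hv
    rcases Submodule.mem_span_insert.mp hv with ⟨a, z, hz, hvz⟩
    have ha : |a| * ρ ≤ ‖v‖ := coeff_abs_le hρ.le (hdist ij) hz hvz
    have ha' : |a| ≤ ‖v‖ / ρ := (le_div_iff₀ hρ).mpr ha
    have hznorm : ‖z‖ ≤ ‖v‖ * (B - 1) := by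
      have hz' : z = v - a • e ij := by rw [hvz]; abel
      have h2 : |a| * ‖e ij‖ ≤ (‖v‖ / ρ) * (2 * R) :=
        mul_le_mul ha' (hnorm ij) (norm_nonneg _) (by positivity)
      calc ‖z‖ = ‖v - a • e ij‖ := by rw [hz']
        _ ≤ ‖v‖ + ‖a • e ij‖ := norm_sub_le _ _
        _ = ‖v‖ + |a| * ‖e ij‖ := by rw [norm_smul, Real.norm_eq_abs]
        _ ≤ ‖v‖ + (‖v‖ / ρ) * (2 * R) := by linarith
        _ = ‖v‖ * (B - 1) := by rw [hBdef]; field_simp; ring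
    rcases ih (Nat.le_of_succ_le hj1) z hz with ⟨β, hβsum, hβ⟩
    have hBj : (1 : ℝ) ≤ B ^ j := one_le_pow₀ hB1'
    refine ⟨fun i => β i + if i = ij then a else 0, ?_, ?_⟩
    · rw [hvz, hβsum]
      rw [Finset.sum_congr rfl (fun i _ => add_smul (β i) _ (e i))]
      rw [Finset.sum_add_distrib]
      have : (∑ i, (if i = ij then a else 0) • e i) = a • e ij := by
        simp [ite_smul, Finset.sum_ite_eq']
      rw [this]
      abel
    · intro i
      have hv0 : (0 : ℝ) ≤ ‖v‖ := norm_nonneg v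
      have hρi : (0 : ℝ) < ρ⁻¹ := by positivity
      have hβi := hβ i
      have key : ‖z‖ * (ρ⁻¹ * B ^ j) + ‖v‖ / ρ ≤ ‖v‖ * (ρ⁻¹ * B ^ (j + 1)) := by
        rw [pow_succ, div_eq_mul_inv]
        have h1 : ‖z‖ * (ρ⁻¹ * B ^ j) ≤ (‖v‖ * (B - 1)) * (ρ⁻¹ * B ^ j) :=
          mul_le_mul_of_nonneg_right hznorm (by positivity)
        nlinarith [mul_le_mul_of_nonneg_left hBj (mul_nonneg hv0 hρi.le)]
      by_cases hi : i = ij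
      · have heq : (fun i => β i + if i = ij then a else 0) i = β i + a := by simp [hi]
        rw [heq]
        calc |β i + a| ≤ |β i| + |a| := abs_add_le _ _
          _ ≤ ‖z‖ * (ρ⁻¹ * B ^ j) + ‖v‖ / ρ := add_le_add hβi ha'
          _ ≤ ‖v‖ * (ρ⁻¹ * B ^ (j + 1)) := key
      · have heq : (fun i => β i + if i = ij then a else 0) i = β i := by simp [hi]
        rw [heq]
        calc |β i| ≤ ‖z‖ * (ρ⁻¹ * B ^ j) := hβi
          _ ≤ ‖z‖ * (ρ⁻¹ * B ^ j) + ‖v‖ / ρ := by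
              have h9 : (0:ℝ) ≤ ‖v‖ / ρ := by positivity
              linarith
          _ ≤ ‖v‖ * (ρ⁻¹ * B ^ (j + 1)) := key

/-- Points in `ρ`-general position: each point is at distance at least `ρ` from the affine
span of the previous ones. -/
def InGenPos (m k : ℕ) (ρ : ℝ) (y : Fin (k + 1) → EuclideanSpace ℝ (Fin m)) : Prop :=
  ∀ l : Fin (k + 1), 0 < (l : ℕ) →
    ρ ≤ Metric.infDist (y l)
      ((affineSpan ℝ (y '' {i : Fin (k + 1) | (i : ℕ) < (l : ℕ)}) :
        AffineSubspace ℝ (EuclideanSpace ℝ (Fin m))) : Set (EuclideanSpace ℝ (Fin m)))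

/-- Quantitative basis bound: if `y_0, …, y_k` lie in a ball of radius `R` and are in
`ρ`-general position, then any unit vector of `span{y_i - y_0}` can be written as a
combination `Σ α_i (y_i - y_0)` with coefficients bounded by a constant `c(k, R, ρ)`. -/
theorem stmt14 (k : ℕ) (ρ R : ℝ) (hρ : 0 < ρ) (hR : 0 < R) :
    ∃ c : ℝ, 0 < c ∧
      ∀ (m : ℕ) (y : Fin (k + 1) → EuclideanSpace ℝ (Fin m))
        (center : EuclideanSpace ℝ (Fin m)),
        (∀ i, y i ∈ closedBall center R) →
        InGenPos m k ρ y →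
        ∀ v : EuclideanSpace ℝ (Fin m),
          v ∈ Submodule.span ℝ (Set.range (fun i : Fin k => y i.succ - y 0)) →
          ‖v‖ = 1 →
          ∃ α : Fin k → ℝ,
            v = ∑ i, α i • (y i.succ - y 0) ∧ ∀ i, |α i| ≤ c := by

  refine ⟨ρ⁻¹ * (2 + 2 * R / ρ) ^ k, by positivity, ?_⟩
  intro m y center hball hgen v hv hv1
  have hball' : ∀ i, dist (y i) center ≤ R := fun i => Metric.mem_closedBall.mp (hball i)
  set e : Fin k → EuclideanSpace ℝ (Fin m) := fun i => y i.succ - y 0 with he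
  -- norm bound
  have hnorm : ∀ i, ‖e i‖ ≤ 2 * R := by
    intro i
    have h1 : dist (y i.succ) center ≤ R := hball' i.succ
    have h2 : dist (y 0) center ≤ R := hball' 0
    calc ‖e i‖ = dist (y i.succ) (y 0) := by rw [dist_eq_norm]
      _ ≤ dist (y i.succ) center + dist center (y 0) := dist_triangle _ _ _
      _ ≤ R + R := add_le_add h1 (by rwa [dist_comm])
      _ = 2 * R := by ring
  -- distance bound
  have hdist : ∀ i : Fin k,
      ρ ≤ Metric.infDist (e i)
        ((Submodule.span ℝ (e '' {i' : Fin k | (i' : ℕ) < (i : ℕ)}) : Submodule ℝ (EuclideanSpace ℝ (Fin m))) : Set (EuclideanSpace ℝ (Fin m))) := by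
    intro i
    set W : Submodule ℝ (EuclideanSpace ℝ (Fin m)) := Submodule.span ℝ (e '' {i' : Fin k | (i' : ℕ) < (i : ℕ)}) with hW
    set A := affineSpan ℝ (y '' {i' : Fin (k + 1) | (i' : ℕ) < ((i.succ : Fin (k+1)) : ℕ)}) with hA
    have hgeni := hgen i.succ (by simp)
    have hy0A : y 0 ∈ A := subset_affineSpan ℝ _ ⟨0, by simp, rfl⟩
    have hWdir : W ≤ A.direction := by
      rw [hW]
      apply Submodule.span_le.mpr
      rintro _ ⟨i', hi', rfl⟩
      have h1 : y i'.succ ∈ A := subset_affineSpan ℝ _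
        ⟨i'.succ, by simpa using Nat.succ_lt_succ hi', rfl⟩
      have := AffineSubspace.vsub_mem_direction h1 hy0A
      simpa [vsub_eq_sub] using this
    by_contra hcon
    push_neg at hcon
    have hWne : ((W : Set (EuclideanSpace ℝ (Fin m)))).Nonempty := ⟨0, W.zero_mem⟩
    rcases (Metric.infDist_lt_iff hWne).mp hcon with ⟨z, hzW, hzd⟩
    have hzA : z +ᵥ y 0 ∈ A := AffineSubspace.vadd_mem_of_mem_direction (hWdir hzW) hy0A
    have hdd : dist (y i.succ) (z +ᵥ y 0) = dist (e i) z := by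
      rw [dist_eq_norm, dist_eq_norm]
      congr 1
      simp only [he, vadd_eq_add]
      abel
    have : ρ ≤ dist (y i.succ) (z +ᵥ y 0) := hgeni.trans (Metric.infDist_le_dist_of_mem hzA)
    rw [hdd] at this
    exact absurd hzd (not_lt.mpr this)
  -- apply the main induction
  have huniv : {i : Fin k | (i : ℕ) < k} = Set.univ := by
    ext i; simp [i.isLt]
  have hrange : Set.range e = e '' {i : Fin k | (i : ℕ) < k} := by
    rw [huniv, Set.image_univ]
  rw [hrange] at hv
  rcases main_ind k ρ R hρ hR e hnorm hdist k le_rfl v hv with ⟨α, hsum, hbd⟩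
  refine ⟨α, hsum, fun i => ?_⟩
  have := hbd i
  rwa [hv1, one_mul] at this
end

section
/- Let ρ ∈ (0, 1/10), k ≤ m, J, h ∈ ℕ with h < J, and let C_h ⊂ C_{h+1} be two finite sets of points in B(0,1) ⊂ ℝ^m with radius assignments r_x such that r_x = ρ^{J-h-1} for x ∈ C_{h+1}\C_h, the balls {B(x, r_x/5)}_{x ∈ C_{h+1}} are pairwise disjoint, and r_x ≤ ρ^{J-h-1} for all x ∈ C_{h+1}. Define μ_h = Σ_{x∈C_h} r_x^k δ_x and μ_{h+1} = Σ_{x∈C_{h+1}} r_x^k δ_x. Suppose μ_h(B(x,s)) ≤ C_in s^k for all x ∈ B(0,1) and s ∈ [ρ^J/5, ρ^{J-h}]. Then there is C_f depending only on C_in, ρ, m such that μ_{h+1}(B(x,s)) ≤ C_f s^k whenever either (i) B(x,s) ∩ (C_{h+1}\C_h) = ∅ and s ∈ [ρ^J/5, 2ρ^{J-h-1}], or (ii) B(x,s) contains a point of C_{h+1}\C_h and s ∈ [2ρ^{J-h}, 2ρ^{J-h-1}]. -/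
open MeasureTheory Metric Set

/-- Greedy construction of a `δ`-net of a finite set. -/
lemma exists_net {E : Type*} [MetricSpace E] (δ : ℝ) (hδ : 0 < δ) (T : Finset E) :
    ∃ N : Finset E, N ⊆ T ∧ (∀ z ∈ T, ∃ y ∈ N, dist z y < δ) ∧
      (N : Set E).Pairwise fun a b => δ ≤ dist a b := by
  classical
  generalize hn : T.card = n
  induction n using Nat.strong_induction_on generalizing T with
  | _ n ih =>
    rcases T.eq_empty_or_nonempty with rfl | ⟨a, ha⟩
    · exact ⟨∅, by simp, by simp, by simp⟩
    · set T' := T.filter (fun z => δ ≤ dist z a) with hT'def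
      have haT' : a ∉ T' := by
        simp only [hT'def, Finset.mem_filter, dist_self, not_and]
        intro _; linarith
      have hss : T' ⊂ T :=
        (Finset.ssubset_iff_of_subset (Finset.filter_subset _ _)).mpr ⟨a, ha, haT'⟩
      have hcard : T'.card < n := hn ▸ Finset.card_lt_card hss
      obtain ⟨N', h1, h2, h3⟩ := ih T'.card hcard T' rfl
      refine ⟨insert a N', ?_, ?_, ?_⟩
      · exact Finset.insert_subset ha (h1.trans (Finset.filter_subset _ _))
      · intro z hz
        by_cases hza : dist z a < δ
        · exact ⟨a, Finset.mem_insert_self _ _, hza⟩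
        · obtain ⟨y, hy, hzy⟩ := h2 z (Finset.mem_filter.mpr ⟨hz, le_of_not_gt hza⟩)
          exact ⟨y, Finset.mem_insert_of_mem hy, hzy⟩
      · rw [Finset.coe_insert, Set.pairwise_insert]
        refine ⟨h3, fun b hb _ => ?_⟩
        have hba : δ ≤ dist b a := (Finset.mem_filter.mp (h1 hb)).2
        exact ⟨by rwa [dist_comm], hba⟩

/-- Packing bound: disjoint balls of radius `δ` with centers in `ball x s`. -/
lemma packing_bound (m : ℕ) (x : EuclideanSpace ℝ (Fin m)) (s δ : ℝ)
    (hδ : 0 < δ) (hs : 0 < s)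
    (N : Finset (EuclideanSpace ℝ (Fin m)))
    (hN : ∀ y ∈ N, y ∈ ball x s)
    (hdisj : (N : Set (EuclideanSpace ℝ (Fin m))).PairwiseDisjoint fun y => ball y δ) :
    (N.card : ℝ) * δ ^ m ≤ (s + δ) ^ m := by
  rcases Nat.eq_zero_or_pos m with rfl | hm
  · have : N.card ≤ 1 := Finset.card_le_one.mpr (fun a _ b _ => Subsingleton.elim a b)
    simp only [pow_zero, mul_one]
    exact_mod_cast this
  · haveI : Nontrivial (EuclideanSpace ℝ (Fin m)) := by
      apply Module.nontrivial_of_finrank_pos (R := ℝ)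
      rw [finrank_euclideanSpace_fin]; exact hm
    set V := volume (ball (0 : EuclideanSpace ℝ (Fin m)) 1) with hV
    have hV0 : V ≠ 0 := (measure_ball_pos volume 0 one_pos).ne'
    have hVtop : V ≠ ⊤ := measure_ball_lt_top.ne
    have hvol : ∀ y : EuclideanSpace ℝ (Fin m),
        volume (ball y δ) = ENNReal.ofReal (δ ^ m) * V := by
      intro y
      rw [Measure.addHaar_ball volume y hδ.le, finrank_euclideanSpace_fin]
    have hunion : (⋃ y ∈ N, ball y δ) ⊆ ball x (s + δ) := by
      intro z hz
      simp only [Set.mem_iUnion] at hz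
      obtain ⟨y, hy, hzy⟩ := hz
      have h1 : dist y x < s := mem_ball.mp (hN y hy)
      have h2 : dist z y < δ := mem_ball.mp hzy
      exact mem_ball.mpr (lt_of_le_of_lt (dist_triangle z y x) (by linarith))
    have hmeas : volume (⋃ y ∈ N, ball y δ) = ∑ y ∈ N, volume (ball y δ) :=
      measure_biUnion_finset hdisj (fun _ _ => measurableSet_ball)
    have key : (N.card : ENNReal) * ENNReal.ofReal (δ ^ m) * V
        ≤ ENNReal.ofReal ((s + δ) ^ m) * V := by
      calc (N.card : ENNReal) * ENNReal.ofReal (δ ^ m) * V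
          = ∑ y ∈ N, volume (ball y δ) := by
            rw [Finset.sum_congr rfl (fun y _ => hvol y), Finset.sum_const, nsmul_eq_mul,
              mul_assoc]
        _ = volume (⋃ y ∈ N, ball y δ) := hmeas.symm
        _ ≤ volume (ball x (s + δ)) := measure_mono hunion
        _ = ENNReal.ofReal ((s + δ) ^ m) * V := by
            rw [Measure.addHaar_ball volume x (by linarith), finrank_euclideanSpace_fin]
    have key2 : (N.card : ENNReal) * ENNReal.ofReal (δ ^ m) ≤ ENNReal.ofReal ((s + δ) ^ m) :=
      (ENNReal.mul_le_mul_iff_left hV0 hVtop).mp key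
    have key3 : ENNReal.ofReal ((N.card : ℝ) * δ ^ m) ≤ ENNReal.ofReal ((s + δ) ^ m) := by
      rwa [ENNReal.ofReal_mul (by positivity), ENNReal.ofReal_natCast]
    exact (ENNReal.ofReal_le_ofReal_iff (by positivity)).mp key3

/-- Inductive step for the volume bounds on the discrete measures `μ_h` associated to the
first covering: a uniform bound on `μ_h` at scales up to `ρ^{J-h}` propagates to a bound
(with a controlled constant `C_f(C_in, ρ, m)`) on `μ_{h+1}` at scales up to `2ρ^{J-h-1}`. -/
theorem stmt18 (m k : ℕ) (hk : k ≤ m) (ρ : ℝ) (hρ0 : 0 < ρ) (hρ : ρ < 1/10)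
    (Cin : ℝ) (hCin : 0 < Cin) :
    ∃ Cf : ℝ, 0 < Cf ∧
      ∀ (J h : ℕ), h < J →
      ∀ (Ch Ch1 : Finset (EuclideanSpace ℝ (Fin m))) (r : EuclideanSpace ℝ (Fin m) → ℝ),
        Ch ⊆ Ch1 →
        (∀ x ∈ Ch1, x ∈ ball (0 : EuclideanSpace ℝ (Fin m)) 1) →
        (∀ x ∈ Ch1, x ∉ Ch → r x = ρ ^ (J - h - 1)) →
        (∀ x ∈ Ch1, 0 < r x ∧ r x ≤ ρ ^ (J - h - 1)) →
        ((Ch1 : Set (EuclideanSpace ℝ (Fin m))).PairwiseDisjoint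
          (fun x => ball x (r x / 5))) →
        (∀ (x : EuclideanSpace ℝ (Fin m)) (s : ℝ),
          ρ ^ J / 5 ≤ s → s ≤ ρ ^ (J - h) →
          (∑ z ∈ Ch, Set.indicator (ball x s) (fun z => r z ^ k) z) ≤ Cin * s ^ k) →
        ∀ (x : EuclideanSpace ℝ (Fin m)) (s : ℝ),
          (((∀ z ∈ Ch1, z ∉ Ch → z ∉ ball x s) ∧
              ρ ^ J / 5 ≤ s ∧ s ≤ 2 * ρ ^ (J - h - 1)) ∨
            ((∃ z ∈ Ch1, z ∉ Ch ∧ z ∈ ball x s) ∧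
              2 * ρ ^ (J - h) ≤ s ∧ s ≤ 2 * ρ ^ (J - h - 1))) →
          (∑ z ∈ Ch1, Set.indicator (ball x s) (fun z => r z ^ k) z) ≤ Cf * s ^ k := by
  classical
  refine ⟨Cin + Cin * (4/ρ + 1) ^ m + 11 ^ m * (1/ρ) ^ m, by positivity, ?_⟩
  intro J h hJ Ch Ch1 r hsub hball hrnew hrpos hdisj hind x s hcase
  set t := ρ ^ (J - h - 1) with ht
  set δ := ρ ^ (J - h) with hδdef
  have ht0 : 0 < t := pow_pos hρ0 _
  have hδ0 : 0 < δ := pow_pos hρ0 _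
  have hδt : δ = t * ρ := by
    rw [hδdef, ht, ← pow_succ]
    congr 1; omega
  have hρ1 : ρ ≤ 1 := by linarith
  have hρJ0 : 0 < ρ ^ J := pow_pos hρ0 _
  have hρJ : ρ ^ J / 5 ≤ δ := by
    have h1 : ρ ^ J ≤ ρ ^ (J - h) := pow_le_pow_of_le_one hρ0.le hρ1 (Nat.sub_le J h)
    rw [← hδdef] at h1
    linarith
  have hf : ∀ z ∈ Ch1, 0 ≤ r z ^ k := fun z hz => pow_nonneg (hrpos z hz).1.le k
  -- Covering bound for the old points
  have hcover : ∀ s' : ℝ, δ ≤ s' → s' ≤ 2 * t →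
      (∑ z ∈ Ch, Set.indicator (ball x s') (fun z => r z ^ k) z)
        ≤ (4/ρ + 1) ^ m * (Cin * s' ^ k) := by
    intro s' hδs hs2
    have hs0 : 0 < s' := hδ0.trans_le hδs
    set T := Ch.filter (fun z => z ∈ ball x s') with hT
    obtain ⟨N, hNT, hNcov, hNsep⟩ := exists_net δ hδ0 T
    have hpt : ∀ z ∈ Ch, Set.indicator (ball x s') (fun z => r z ^ k) z ≤
        ∑ y ∈ N, Set.indicator (ball y δ) (fun z => r z ^ k) z := by
      intro z hz
      have hzr : 0 ≤ r z ^ k := hf z (hsub hz)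
      by_cases hzb : z ∈ ball x s'
      · obtain ⟨y, hy, hzy⟩ := hNcov z (Finset.mem_filter.mpr ⟨hz, hzb⟩)
        rw [Set.indicator_of_mem hzb]
        have hey : Set.indicator (ball y δ) (fun z => r z ^ k) z = r z ^ k :=
          Set.indicator_of_mem (mem_ball.mpr hzy) _
        rw [← hey]
        exact Finset.single_le_sum
          (f := fun y => Set.indicator (ball y δ) (fun z => r z ^ k) z)
          (fun i _ => Set.indicator_apply_nonneg (fun _ => hzr)) hy
      · rw [Set.indicator_of_notMem hzb]
        exact Finset.sum_nonneg fun y _ => Set.indicator_apply_nonneg (fun _ => hzr)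
    have hNball : ∀ y ∈ N, y ∈ ball x s' := fun y hy => (Finset.mem_filter.mp (hNT hy)).2
    have hNdisj : (N : Set (EuclideanSpace ℝ (Fin m))).PairwiseDisjoint
        fun y => ball y (δ/2) := by
      intro a ha b hb hab
      exact ball_disjoint_ball (by have := hNsep ha hb hab; linarith)
    have hpack := packing_bound m x s' (δ/2) (by linarith) hs0 N hNball hNdisj
    have hsδ : s' * ρ ≤ 2 * δ := by
      rw [hδt]; nlinarith
    have hratio : s' + δ/2 ≤ (4/ρ + 1) * (δ/2) := by
      have hid : (4/ρ + 1) * (δ/2) = 2 * δ / ρ + δ/2 := by field_simp; ring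
      have h2 : s' ≤ 2 * δ / ρ := (le_div_iff₀ hρ0).mpr hsδ
      linarith
    have hcard : (N.card : ℝ) ≤ (4/ρ + 1) ^ m := by
      have h1 : (s' + δ/2) ^ m ≤ ((4/ρ + 1) * (δ/2)) ^ m :=
        pow_le_pow_left₀ (by linarith) hratio m
      rw [mul_pow] at h1
      exact le_of_mul_le_mul_right (hpack.trans h1) (pow_pos (by linarith) m)
    calc (∑ z ∈ Ch, Set.indicator (ball x s') (fun z => r z ^ k) z)
        ≤ ∑ z ∈ Ch, ∑ y ∈ N, Set.indicator (ball y δ) (fun z => r z ^ k) z :=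
          Finset.sum_le_sum hpt
      _ = ∑ y ∈ N, ∑ z ∈ Ch, Set.indicator (ball y δ) (fun z => r z ^ k) z :=
          Finset.sum_comm
      _ ≤ N.card • (Cin * δ ^ k) :=
          Finset.sum_le_card_nsmul _ _ _ (fun y _ => hind y δ hρJ le_rfl)
      _ = (N.card : ℝ) * (Cin * δ ^ k) := nsmul_eq_mul _ _
      _ ≤ (4/ρ + 1) ^ m * (Cin * δ ^ k) :=
          mul_le_mul_of_nonneg_right hcard (by positivity)
      _ ≤ (4/ρ + 1) ^ m * (Cin * s' ^ k) := by
          have hδk : δ ^ k ≤ s' ^ k := pow_le_pow_left₀ hδ0.le hδs k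
          exact mul_le_mul_of_nonneg_left
            (mul_le_mul_of_nonneg_left hδk hCin.le) (by positivity)
  -- Packing bound for the new points
  have hnew : ∀ s' : ℝ, 0 < s' → s' ≤ 2 * t →
      (∑ z ∈ Ch1 \ Ch, Set.indicator (ball x s') (fun z => r z ^ k) z)
        ≤ 11 ^ m * t ^ k := by
    intro s' hs0 hs2
    set P := (Ch1 \ Ch).filter (fun z => z ∈ ball x s') with hP
    have hPmem : ∀ z ∈ P, z ∈ Ch1 ∧ z ∉ Ch ∧ z ∈ ball x s' := by
      intro z hz
      obtain ⟨hz1, hz2⟩ := Finset.mem_filter.mp hz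
      obtain ⟨hz3, hz4⟩ := Finset.mem_sdiff.mp hz1
      exact ⟨hz3, hz4, hz2⟩
    have hsum : (∑ z ∈ Ch1 \ Ch, Set.indicator (ball x s') (fun z => r z ^ k) z)
        = ∑ z ∈ P, r z ^ k := by
      rw [hP, Finset.sum_filter]
      exact Finset.sum_congr rfl fun z _ => Set.indicator_apply _ _ _
    have hval : ∑ z ∈ P, r z ^ k = (P.card : ℝ) * t ^ k := by
      rw [Finset.sum_congr rfl (fun z hz => by
        rw [hrnew z (hPmem z hz).1 (hPmem z hz).2.1]), Finset.sum_const, nsmul_eq_mul]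
    have hPdisj : (P : Set (EuclideanSpace ℝ (Fin m))).PairwiseDisjoint
        fun z => ball z (t/5) := by
      intro a ha b hb hab
      have ha' := hPmem a ha
      have hb' := hPmem b hb
      have hra : r a = t := hrnew a ha'.1 ha'.2.1
      have hrb : r b = t := hrnew b hb'.1 hb'.2.1
      have := hdisj (Finset.mem_coe.mpr ha'.1) (Finset.mem_coe.mpr hb'.1) hab
      simpa [Function.onFun, hra, hrb] using this
    have hPball : ∀ y ∈ P, y ∈ ball x s' := fun y hy => (hPmem y hy).2.2
    have hpack := packing_bound m x s' (t/5) (by linarith) hs0 P hPball hPdisj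
    have hcard : (P.card : ℝ) ≤ 11 ^ m := by
      have h1 : (s' + t/5) ^ m ≤ (11 * (t/5)) ^ m :=
        pow_le_pow_left₀ (by linarith) (by linarith) m
      rw [mul_pow] at h1
      exact le_of_mul_le_mul_right (hpack.trans h1) (pow_pos (by linarith) m)
    rw [hsum, hval]
    exact mul_le_mul_of_nonneg_right hcard (pow_nonneg ht0.le k)
  have hA : (0:ℝ) ≤ Cin * (4/ρ + 1) ^ m := by positivity
  have hB : (0:ℝ) ≤ 11 ^ m * (1/ρ) ^ m := by positivity
  rcases hcase with ⟨hno, hs1, hs2⟩ | ⟨⟨z0, hz01, hz02, hz03⟩, hs1, hs2⟩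
  · -- case (i): no new points in the ball
    have hs0 : 0 < s := lt_of_lt_of_le (by positivity) hs1
    have hzero : (∑ z ∈ Ch1 \ Ch, Set.indicator (ball x s) (fun z => r z ^ k) z) = 0 :=
      Finset.sum_eq_zero fun z hz => by
        obtain ⟨hz1, hz2⟩ := Finset.mem_sdiff.mp hz
        exact Set.indicator_of_notMem (hno z hz1 hz2) _
    rw [← Finset.sum_sdiff hsub, hzero, zero_add]
    by_cases hsδ : s ≤ δ
    · have h1 := hind x s hs1 hsδ
      have h2 : s ^ k ≥ 0 := pow_nonneg hs0.le k
      nlinarith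
    · push_neg at hsδ
      have h1 := hcover s hsδ.le hs2
      have h2 : s ^ k ≥ 0 := pow_nonneg hs0.le k
      have h3 : (0:ℝ) ≤ Cin * s ^ k := by positivity
      nlinarith
  · -- case (ii): a new point in the ball
    have hs0 : 0 < s := lt_of_lt_of_le (by positivity) hs1
    have hδs : δ ≤ s := by linarith
    have h1 := hcover s hδs hs2
    have h2 := hnew s hs0 hs2
    have htk : t ^ k ≤ (1/ρ) ^ m * s ^ k := by
      have h3 : t ≤ s / ρ := by
        rw [le_div_iff₀ hρ0]
        calc t * ρ = δ := hδt.symm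
          _ ≤ s := hδs
      have h4 : t ^ k ≤ (s / ρ) ^ k := pow_le_pow_left₀ ht0.le h3 k
      have h5 : (s / ρ) ^ k = (1/ρ) ^ k * s ^ k := by rw [← mul_pow]; ring_nf
      have h6 : (1/ρ) ^ k ≤ (1/ρ) ^ m :=
        pow_le_pow_right₀ (by rw [le_div_iff₀ hρ0]; linarith) hk
      have h7 : (0:ℝ) ≤ s ^ k := pow_nonneg hs0.le k
      calc t ^ k ≤ (1/ρ) ^ k * s ^ k := by rw [← h5]; exact h4
        _ ≤ (1/ρ) ^ m * s ^ k := mul_le_mul_of_nonneg_right h6 h7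
    rw [← Finset.sum_sdiff hsub]
    have h8 : (0:ℝ) ≤ s ^ k := pow_nonneg hs0.le k
    have h9 : (11:ℝ) ^ m * t ^ k ≤ 11 ^ m * ((1/ρ) ^ m * s ^ k) :=
      mul_le_mul_of_nonneg_left htk (by positivity)
    have h10 : (0:ℝ) ≤ Cin * s ^ k := by positivity
    nlinarith
end
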